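/- arXiv:2103.04957 — 3 statements merged into one kernel-verified Lean document; each statement's English description precedes it below -/
import Mathlib

section
/- For any function f from sets of two points in the plane to ordered pairs of points (a list representation) such that f({x,y}) is always a permutation of (x,y) (i.e., f(S) lists exactly the elements of S), f cannot be continuous: specifically, consider S(θ) = {(-cos θ, -sin θ), (cos θ, sin θ)}. There is no continuous function L : [0, π] → ℝ² × ℝ² with L(θ) an ordering of the elements of S(θ) for all θ, and L(0) = L(π) = ((-1,0),(1,0)). -/
open Topology Filter


/-- The moving two-point set: first point of `S θ`. -/
noncomputable def pPt (θ : ℝ) : ℝ × ℝ := (-Real.cos θ, -Real.sin θ)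

/-- The moving two-point set: second point of `S θ`. -/
noncomputable def qPt (θ : ℝ) : ℝ × ℝ := (Real.cos θ, Real.sin θ)

/-- There is no continuous list representation of the two-point set
`S(θ) = {(-cos θ, -sin θ), (cos θ, sin θ)}` on `[0, π]` that starts and ends at
`((-1,0),(1,0))`. -/
theorem no_continuous_ordering :
    ¬ ∃ L : ℝ → (ℝ × ℝ) × (ℝ × ℝ),
      ContinuousOn L (Set.Icc 0 Real.pi) ∧
      (∀ θ ∈ Set.Icc (0:ℝ) Real.pi,
        L θ = (pPt θ, qPt θ) ∨ L θ = (qPt θ, pPt θ)) ∧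
      L 0 = ((-1, 0), (1, 0)) ∧ L Real.pi = ((-1, 0), (1, 0)) := by
  rintro ⟨L, hL, hOrd, h0, hπ⟩
  have hπpos := Real.pi_pos
  have hπ2 : (0:ℝ) < Real.pi / 2 := by linarith
  have hπ2' : Real.pi / 2 < Real.pi := by linarith
  set f : ℝ → ℝ := fun θ => (L θ).1.1 with hfdef
  set g : ℝ → ℝ := fun θ => (L θ).1.2 with hgdef
  have hf : ContinuousOn f (Set.Icc 0 Real.pi) := hL.fst.fst
  have hg : ContinuousOn g (Set.Icc 0 Real.pi) := hL.fst.snd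
  -- key dichotomy
  have hdich : ∀ θ ∈ Set.Icc (0:ℝ) Real.pi,
      (f θ = -Real.cos θ ∧ g θ = -Real.sin θ) ∨
      (f θ = Real.cos θ ∧ g θ = Real.sin θ) := by
    intro θ hθ
    rcases hOrd θ hθ with h | h
    · left; constructor <;> simp [hfdef, hgdef, h, pPt]
    · right; constructor <;> simp [hfdef, hgdef, h, qPt]
  have key : ∀ a ∈ Set.Icc (0:ℝ) Real.pi, f a = -1 →
      ∀ s : Set ℝ, s ∈ 𝓝[s] a → (𝓝[s] a).NeBot → s ⊆ Set.Icc 0 Real.pi →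
      ∃ θ ∈ s, f θ < 0 := by
    intro a ha hfa s hs hne hsub
    have hc : Filter.Tendsto f (𝓝[s] a) (𝓝 (-1)) := by
      have := (hf a ha).mono hsub
      rw [ContinuousWithinAt, hfa] at this
      exact this
    have hev : ∀ᶠ θ in 𝓝[s] a, f θ < 0 :=
      hc.eventually (Filter.Tendsto.eventually_lt_const (by norm_num) Filter.tendsto_id)
    exact ((eventually_mem_nhdsWithin.and hev).exists)
  -- near 0 : some θ₁ ∈ Ioo 0 (π/2) with f θ₁ < 0
  have h1 : ∃ θ ∈ Set.Ioo (0:ℝ) (Real.pi/2), f θ < 0 := by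
    apply key 0 ⟨le_refl _, le_of_lt hπpos⟩ (by simp [hfdef, h0])
    · exact self_mem_nhdsWithin
    · rw [← mem_closure_iff_nhdsWithin_neBot, closure_Ioo (ne_of_lt hπ2)]
      exact ⟨le_refl _, le_of_lt hπ2⟩
    · intro x hx; exact ⟨le_of_lt hx.1, by linarith [hx.2]⟩
  -- near π : some θ₂ ∈ Ioo (π/2) π with f θ₂ < 0
  have h2 : ∃ θ ∈ Set.Ioo (Real.pi/2) Real.pi, f θ < 0 := by
    apply key Real.pi ⟨le_of_lt hπpos, le_refl _⟩ (by simp [hfdef, hπ])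
    · exact self_mem_nhdsWithin
    · rw [← mem_closure_iff_nhdsWithin_neBot, closure_Ioo (ne_of_lt hπ2')]
      exact ⟨le_of_lt hπ2', le_refl _⟩
    · intro x hx; exact ⟨by linarith [hx.1], le_of_lt hx.2⟩
  obtain ⟨θ₁, hθ₁, hfθ₁⟩ := h1
  obtain ⟨θ₂, hθ₂, hfθ₂⟩ := h2
  have hθ₁I : θ₁ ∈ Set.Icc (0:ℝ) Real.pi := ⟨le_of_lt hθ₁.1, by linarith [hθ₁.2]⟩
  have hθ₂I : θ₂ ∈ Set.Icc (0:ℝ) Real.pi := ⟨by linarith [hθ₂.1], le_of_lt hθ₂.2⟩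
  have hcos₁ : 0 < Real.cos θ₁ :=
    Real.cos_pos_of_mem_Ioo ⟨by linarith [hθ₁.1], hθ₁.2⟩
  have hcos₂ : Real.cos θ₂ < 0 :=
    Real.cos_neg_of_pi_div_two_lt_of_lt hθ₂.1 (by linarith [hθ₂.2])
  have hsin₁ : 0 < Real.sin θ₁ := Real.sin_pos_of_pos_of_lt_pi hθ₁.1 (by linarith [hθ₁.2])
  have hsin₂ : 0 < Real.sin θ₂ := Real.sin_pos_of_pos_of_lt_pi (by linarith [hθ₂.1]) hθ₂.2
  have hg₁ : g θ₁ < 0 := by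
    rcases hdich θ₁ hθ₁I with ⟨_, hgv⟩ | ⟨hfv, _⟩
    · rw [hgv]; linarith
    · rw [hfv] at hfθ₁; linarith
  have hg₂ : 0 < g θ₂ := by
    rcases hdich θ₂ hθ₂I with ⟨hfv, _⟩ | ⟨_, hgv⟩
    · rw [hfv] at hfθ₂; linarith
    · rw [hgv]; linarith
  have hle : θ₁ ≤ θ₂ := by linarith [hθ₁.2, hθ₂.1]
  have hsub : Set.Icc θ₁ θ₂ ⊆ Set.Icc 0 Real.pi := by
    intro x hx; exact ⟨by linarith [hx.1, hθ₁.1], by linarith [hx.2, hθ₂.2]⟩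
  have := intermediate_value_Icc hle (hg.mono hsub)
  have h0mem : (0:ℝ) ∈ Set.Icc (g θ₁) (g θ₂) := ⟨le_of_lt hg₁, le_of_lt hg₂⟩
  obtain ⟨θ₀, hθ₀, hgθ₀⟩ := this h0mem
  have hθ₀I : θ₀ ∈ Set.Icc (0:ℝ) Real.pi := hsub hθ₀
  have hsin₀ : 0 < Real.sin θ₀ :=
    Real.sin_pos_of_pos_of_lt_pi (by linarith [hθ₀.1, hθ₁.1]) (by linarith [hθ₀.2, hθ₂.2])
  rcases hdich θ₀ hθ₀I with ⟨_, hgv⟩ | ⟨_, hgv⟩ <;> rw [hgv] at hgθ₀ <;> linarith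
end

section
/- Any set function f : {sets of n points in ℝᵈ, n ≥ 2, d ≥ 2} → (ℝᵈ)ⁿ that outputs a list whose entries are exactly the elements of the input set has a discontinuity: there exists ε > 0 such that for every δ > 0 there exist sets S₁, S₂ with Hausdorff distance less than δ but with ∑ⱼ ‖f(S₁)ⱼ - f(S₂)ⱼ‖ ≥ ε. -/
noncomputable section RPaux

open EuclideanSpace Finset

/-- first coordinate of the moving point: clamp of `3 - 2t` to `[-1,1]`. -/
def rpA0 (t : ℝ) : ℝ := max (-1) (min 1 (3 - 2*t))

/-- second coordinate of the moving point. -/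
def rpA1 (t : ℝ) : ℝ := min t (min 1 (3 - t))

lemma rpA0_zero : rpA0 0 = 1 := by norm_num [rpA0]
lemma rpA1_zero : rpA1 0 = 0 := by norm_num [rpA1]
lemma rpA0_three : rpA0 3 = -1 := by norm_num [rpA0]
lemma rpA1_three : rpA1 3 = 0 := by norm_num [rpA1]

lemma abs_rpA0_le (t : ℝ) : |rpA0 t| ≤ 1 := by
  rw [abs_le]; constructor
  · exact le_max_left _ _
  · exact max_le (by norm_num) (min_le_left _ _)

lemma abs_rpA1_le {t : ℝ} (h0 : 0 ≤ t) (h3 : t ≤ 3) : |rpA1 t| ≤ 1 := by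
  rw [abs_le]; constructor
  · simp only [rpA1, le_min_iff]
    refine ⟨by linarith, by norm_num, by linarith⟩
  · exact le_trans (min_le_right _ _) (min_le_left _ _)

lemma rpA0_lip (t s : ℝ) : |rpA0 t - rpA0 s| ≤ 2 * |t - s| := by
  have h1 : |rpA0 t - rpA0 s| ≤ |min 1 (3 - 2*t) - min 1 (3 - 2*s)| := by
    rw [rpA0, rpA0, max_comm (-1) _, max_comm (-1) _]
    exact abs_max_sub_max_le_abs _ _ _
  have h2 : |min 1 (3 - 2*t) - min 1 (3 - 2*s)| ≤ max |(1:ℝ) - 1| |(3 - 2*t) - (3 - 2*s)| :=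
    abs_min_sub_min_le_max _ _ _ _
  have h3 : |(3 - 2*t) - (3 - 2*s)| = 2 * |t - s| := by
    rw [show (3 - 2*t) - (3 - 2*s) = 2 * (s - t) by ring, abs_mul, abs_sub_comm]
    norm_num
  calc |rpA0 t - rpA0 s| ≤ _ := h1
    _ ≤ _ := h2
    _ ≤ 2 * |t - s| := by
        apply max_le
        · rw [show |(1:ℝ) - 1| = 0 by norm_num]; positivity
        · rw [h3]

lemma rpA1_lip (t s : ℝ) : |rpA1 t - rpA1 s| ≤ |t - s| := by
  have h2 : |rpA1 t - rpA1 s| ≤ max |t - s| |min 1 (3 - t) - min 1 (3 - s)| :=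
    abs_min_sub_min_le_max _ _ _ _
  have h3 : |min 1 (3 - t) - min 1 (3 - s)| ≤ max |(1:ℝ) - 1| |(3 - t) - (3 - s)| :=
    abs_min_sub_min_le_max _ _ _ _
  have h4 : |(3 - t) - (3 - s)| = |t - s| := by
    rw [show (3 - t) - (3 - s) = -(t - s) by ring, abs_neg]
  refine h2.trans (max_le le_rfl (h3.trans (max_le ?_ ?_)))
  · rw [show |(1:ℝ) - 1| = 0 by norm_num]; positivity
  · rw [h4]

end RPaux

section RPmain

open EuclideanSpace Finset Metric

variable {d : ℕ}

noncomputable instance rpDecEq : DecidableEq (EuclideanSpace ℝ (Fin d)) := Classical.decEq _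

/-- coordinate bound in Euclidean space -/
lemma rp_abs_coord_le (x : EuclideanSpace ℝ (Fin d)) (i : Fin d) : |x i| ≤ ‖x‖ := by
  rw [EuclideanSpace.norm_eq]
  have : |x i| = Real.sqrt (‖x i‖ ^ 2) := by
    rw [Real.sqrt_sq_eq_abs, Real.norm_eq_abs, abs_abs]
  rw [this]
  exact Real.sqrt_le_sqrt (Finset.single_le_sum (f := fun j => ‖x j‖^2)
    (fun j _ => sq_nonneg _) (Finset.mem_univ i))

/-- the moving point -/
noncomputable def rpa (hd : 2 ≤ d) (t : ℝ) : EuclideanSpace ℝ (Fin d) :=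
  EuclideanSpace.single ⟨0, by omega⟩ (rpA0 t) + EuclideanSpace.single ⟨1, by omega⟩ (rpA1 t)

lemma rpa_norm_le (hd : 2 ≤ d) {t : ℝ} (h0 : 0 ≤ t) (h3 : t ≤ 3) : ‖rpa hd t‖ ≤ 2 := by
  refine (norm_add_le _ _).trans ?_
  rw [EuclideanSpace.norm_single, EuclideanSpace.norm_single, Real.norm_eq_abs, Real.norm_eq_abs]
  linarith [abs_rpA0_le t, abs_rpA1_le h0 h3]

lemma rpa_coord0 (hd : 2 ≤ d) (t : ℝ) : rpa hd t ⟨0, by omega⟩ = rpA0 t := by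
  simp [rpa, EuclideanSpace.single_apply, PiLp.add_apply, Fin.ext_iff]

lemma rpa_coord1 (hd : 2 ≤ d) (t : ℝ) : rpa hd t ⟨1, by omega⟩ = rpA1 t := by
  simp [rpa, EuclideanSpace.single_apply, PiLp.add_apply, Fin.ext_iff]

lemma one_le_rpa_norm (hd : 2 ≤ d) (t : ℝ) : 1 ≤ ‖rpa hd t‖ := by
  rcases le_or_gt t 1 with h | h
  · have : rpA0 t = 1 := by
      rw [rpA0, min_eq_left (by linarith), max_eq_right (by norm_num)]
    have h2 := rp_abs_coord_le (rpa hd t) ⟨0, by omega⟩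
    rw [rpa_coord0, this] at h2
    simpa using h2
  rcases le_or_gt 2 t with h' | h'
  · have : rpA0 t = -1 := by
      rw [rpA0, min_eq_right (by linarith), max_eq_left (by linarith)]
    have h2 := rp_abs_coord_le (rpa hd t) ⟨0, by omega⟩
    rw [rpa_coord0, this] at h2
    simpa using h2
  · have : rpA1 t = 1 := by
      rw [rpA1, min_eq_left (show (1:ℝ) ≤ 3 - t by linarith), min_eq_right (by linarith)]
    have h2 := rp_abs_coord_le (rpa hd t) ⟨1, by omega⟩
    rw [rpa_coord1, this] at h2
    simpa using h2

lemma rpa_lip (hd : 2 ≤ d) (t s : ℝ) : ‖rpa hd t - rpa hd s‖ ≤ 3 * |t - s| := by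
  have : rpa hd t - rpa hd s =
      EuclideanSpace.single ⟨0, by omega⟩ (rpA0 t - rpA0 s)
        + EuclideanSpace.single ⟨1, by omega⟩ (rpA1 t - rpA1 s) := by
    ext j
    simp only [rpa, PiLp.sub_apply, PiLp.add_apply, EuclideanSpace.single_apply]
    split_ifs <;> ring
  rw [this]
  refine (norm_add_le _ _).trans ?_
  rw [EuclideanSpace.norm_single, EuclideanSpace.norm_single, Real.norm_eq_abs, Real.norm_eq_abs]
  linarith [rpA0_lip t s, rpA1_lip t s]

lemma rpa_three (hd : 2 ≤ d) : rpa hd 3 = - rpa hd 0 := by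
  simp only [rpa, rpA0_zero, rpA1_zero, rpA0_three, rpA1_three]
  ext i
  simp [EuclideanSpace.single_apply]
  split <;> norm_num

/-- the fixed far-away points -/
noncomputable def rpR (hd : 2 ≤ d) (n : ℕ) : Finset (EuclideanSpace ℝ (Fin d)) :=
  (Finset.range (n-2)).image (fun i : ℕ => EuclideanSpace.single ⟨0, by omega⟩ ((10:ℝ) + (i:ℝ)))

lemma rpR_card (hd : 2 ≤ d) (n : ℕ) : (rpR hd n).card = n - 2 := by
  rw [rpR, Finset.card_image_of_injective, Finset.card_range]
  intro i j hij
  have := congrArg (fun x => x ⟨0, by omega⟩) hij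
  simp [EuclideanSpace.single_apply] at this
  exact_mod_cast this

lemma rpR_norm (hd : 2 ≤ d) {n : ℕ} {x : EuclideanSpace ℝ (Fin d)} (hx : x ∈ rpR hd n) : 10 ≤ ‖x‖ := by
  rw [rpR, Finset.mem_image] at hx
  obtain ⟨i, _, rfl⟩ := hx
  rw [EuclideanSpace.norm_single, Real.norm_eq_abs]
  rw [abs_of_nonneg (by positivity)]
  simp

/-- the configuration at time `t` -/
noncomputable def rpS (hd : 2 ≤ d) (n : ℕ) (t : ℝ) : Finset (EuclideanSpace ℝ (Fin d)) :=
  insert (rpa hd t) (insert (-(rpa hd t)) (rpR hd n))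

lemma rpa_ne_neg (hd : 2 ≤ d) (t : ℝ) : rpa hd t ≠ -(rpa hd t) := by
  intro h
  have h1 := one_le_rpa_norm hd t
  have h2 : rpa hd t + rpa hd t = 0 := by nth_rewrite 2 [h]; simp
  have h3 : ‖rpa hd t + rpa hd t‖ = 0 := by rw [h2, norm_zero]
  have h4 : rpa hd t + rpa hd t = (2:ℝ) • rpa hd t := by module
  rw [h4, norm_smul, Real.norm_eq_abs] at h3
  rw [abs_of_nonneg (by norm_num)] at h3
  linarith

lemma rpa_not_mem_R (hd : 2 ≤ d) {n : ℕ} {t : ℝ} (h0 : 0 ≤ t) (h3 : t ≤ 3) : rpa hd t ∉ rpR hd n := by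
  intro h
  have h1 := rpR_norm hd h
  have h2 := rpa_norm_le hd h0 h3
  linarith

lemma neg_rpa_not_mem_R (hd : 2 ≤ d) {n : ℕ} {t : ℝ} (h0 : 0 ≤ t) (h3 : t ≤ 3) : -(rpa hd t) ∉ rpR hd n := by
  intro h
  have h1 := rpR_norm hd h
  rw [norm_neg] at h1
  have h2 := rpa_norm_le hd h0 h3
  linarith

lemma rpS_card (hd : 2 ≤ d) {n : ℕ} (hn : 2 ≤ n) {t : ℝ} (h0 : 0 ≤ t) (h3 : t ≤ 3) :
    (rpS hd n t).card = n := by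
  rw [rpS, Finset.card_insert_of_notMem, Finset.card_insert_of_notMem, rpR_card]
  · omega
  · exact neg_rpa_not_mem_R hd h0 h3
  · simp only [Finset.mem_insert]
    push_neg
    exact ⟨rpa_ne_neg hd t, rpa_not_mem_R hd h0 h3⟩

/-- any element of `rpS` other than `rpa t` is at distance at least `2` from `rpa t`. -/
lemma rp_far (hd : 2 ≤ d) {n : ℕ} {t : ℝ} (h0 : 0 ≤ t) (h3 : t ≤ 3) {x : EuclideanSpace ℝ (Fin d)}
    (hx : x ∈ rpS hd n t) (hne : x ≠ rpa hd t) : 2 ≤ ‖x - rpa hd t‖ := by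
  rw [rpS, Finset.mem_insert, Finset.mem_insert] at hx
  rcases hx with rfl | rfl | hx
  · exact absurd rfl hne
  · have h2 : -(rpa hd t) - rpa hd t = (-2:ℝ) • rpa hd t := by module
    rw [h2, norm_smul, Real.norm_eq_abs, abs_of_nonpos (by norm_num), neg_neg]
    have := one_le_rpa_norm hd t
    linarith
  · have h1 := rpR_norm hd hx
    have h2 := rpa_norm_le hd h0 h3
    have := norm_sub_norm_le x (rpa hd t)
    calc (2:ℝ) ≤ ‖x‖ - ‖rpa hd t‖ := by linarith
      _ ≤ ‖x - rpa hd t‖ := norm_sub_norm_le _ _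

lemma rpS_hausdorff (hd : 2 ≤ d) {n : ℕ} (t s : ℝ) :
    hausdorffDist (↑(rpS hd n t) : Set (EuclideanSpace ℝ (Fin d))) ↑(rpS hd n s)
      ≤ 3 * |t - s| := by
  apply hausdorffDist_le_of_mem_dist (by positivity)
  · intro x hx
    simp only [Finset.coe_insert, Set.mem_insert_iff, Finset.mem_coe, rpS] at hx ⊢
    rcases hx with rfl | rfl | hx
    · exact ⟨rpa hd s, Or.inl rfl, by rw [dist_eq_norm]; exact rpa_lip hd t s⟩
    · refine ⟨-(rpa hd s), Or.inr (Or.inl rfl), ?_⟩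
      rw [dist_eq_norm, show -(rpa hd t) - -(rpa hd s) = -(rpa hd t - rpa hd s) by module, norm_neg]
      exact rpa_lip hd t s
    · exact ⟨x, Or.inr (Or.inr hx), by simp⟩
  · intro x hx
    simp only [Finset.coe_insert, Set.mem_insert_iff, Finset.mem_coe, rpS] at hx ⊢
    rcases hx with rfl | rfl | hx
    · refine ⟨rpa hd t, Or.inl rfl, ?_⟩
      rw [dist_eq_norm]
      exact le_of_le_of_eq (rpa_lip hd s t) (by rw [abs_sub_comm])
    · refine ⟨-(rpa hd t), Or.inr (Or.inl rfl), ?_⟩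
      rw [dist_eq_norm, show -(rpa hd s) - -(rpa hd t) = -(rpa hd s - rpa hd t) by module, norm_neg]
      exact le_of_le_of_eq (rpa_lip hd s t) (by rw [abs_sub_comm])
    · exact ⟨x, Or.inr (Or.inr hx), by simp⟩

lemma rpS_three (hd : 2 ≤ d) (n : ℕ) : rpS hd n 3 = rpS hd n 0 := by
  rw [rpS, rpS, rpa_three hd, neg_neg, Finset.insert_comm]

end RPmain

/-- Any function mapping each `n`-element set of points in `ℝᵈ` (`n, d ≥ 2`) to a list of
exactly its elements has a discontinuity with respect to the Hausdorff distance. -/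
theorem responsibility_problem (d n : ℕ) (hd : 2 ≤ d) (hn : 2 ≤ n)
    (f : Finset (EuclideanSpace ℝ (Fin d)) → (Fin n → EuclideanSpace ℝ (Fin d)))
    (hf : ∀ S : Finset (EuclideanSpace ℝ (Fin d)), S.card = n →
      Function.Injective (f S) ∧ (∀ j, f S j ∈ S) ∧ (∀ x ∈ S, ∃ j, f S j = x)) :
    ∃ ε > (0:ℝ), ∀ δ > (0:ℝ),
      ∃ S₁ S₂ : Finset (EuclideanSpace ℝ (Fin d)), S₁.card = n ∧ S₂.card = n ∧
        Metric.hausdorffDist (S₁ : Set (EuclideanSpace ℝ (Fin d)))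
          (S₂ : Set (EuclideanSpace ℝ (Fin d))) < δ ∧
        ε ≤ ∑ j, ‖f S₁ j - f S₂ j‖ := by
  refine ⟨1/2, by norm_num, fun δ hδ => ?_⟩
  -- choose number of steps
  obtain ⟨N0, hN0⟩ := exists_nat_gt (9 / δ)
  set N := N0 + 18 with hN
  have hNpos : 0 < N := by omega
  have hNR : (0:ℝ) < N := by exact_mod_cast hNpos
  have hstep : 9 / (N:ℝ) < δ := by
    rw [div_lt_iff₀ hNR]
    have : 9 / δ < (N:ℝ) := by
      have : (N0:ℝ) ≤ N := by exact_mod_cast Nat.le_add_right _ _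
      linarith
    calc (9:ℝ) = (9/δ) * δ := by field_simp
      _ < N * δ := by exact mul_lt_mul_of_pos_right this hδ
      _ = δ * N := by ring
  have hstep2 : 9 / (N:ℝ) ≤ 1/2 := by
    rw [div_le_div_iff₀ hNR (by norm_num)]
    have : (18:ℝ) ≤ N := by exact_mod_cast (by omega : 18 ≤ N)
    linarith
  -- time points
  set T : ℕ → ℝ := fun k => 3 * k / N with hT
  have hT0 : ∀ k, 0 ≤ T k := fun k => by positivity
  have hT3 : ∀ k ≤ N, T k ≤ 3 := by
    intro k hk
    rw [hT]
    rw [div_le_iff₀ hNR]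
    have : (k:ℝ) ≤ N := by exact_mod_cast hk
    linarith
  have hTdiff : ∀ k, |T (k+1) - T k| ≤ 3 / N := by
    intro k
    rw [hT]
    have : 3 * ((k:ℝ)+1) / N - 3 * k / N = 3 / N := by field_simp; ring
    simp only [Nat.cast_add, Nat.cast_one]
    rw [this, abs_of_nonneg (by positivity)]
  have hcard : ∀ k ≤ N, (rpS hd n (T k)).card = n :=
    fun k hk => rpS_card hd hn (hT0 k) (hT3 k hk)
  -- the tracked index
  have h0card := hcard 0 (Nat.zero_le N)
  obtain ⟨_, hmem0, hsurj0⟩ := hf _ h0card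
  obtain ⟨j₀, hj₀⟩ := hsurj0 (rpa hd (T 0)) (by rw [rpS]; exact Finset.mem_insert_self _ _)
  -- the set of good indices
  set K : Finset ℕ := (Finset.range (N+1)).filter
    (fun k => f (rpS hd n (T k)) j₀ = rpa hd (T k)) with hK
  have hKne : K.Nonempty := ⟨0, by
    rw [hK, Finset.mem_filter, Finset.mem_range]
    exact ⟨by omega, hj₀⟩⟩
  obtain ⟨k, hkK, hkmax⟩ : ∃ k ∈ K, ∀ m ∈ K, m ≤ k :=
    ⟨K.max' hKne, K.max'_mem hKne, fun m hm => K.le_max' m hm⟩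
  rw [hK, Finset.mem_filter, Finset.mem_range] at hkK
  obtain ⟨hkN, hkeq⟩ := hkK
  have hkN' : k ≤ N := by omega
  -- k ≠ N
  have hTN : T N = 3 := by rw [hT]; field_simp
  have hkne : k ≠ N := by
    intro h
    rw [h, hTN, rpS_three hd] at hkeq
    have hT00 : T 0 = 0 := by rw [hT]; simp
    rw [hT00] at hj₀
    have h3 : rpa hd 0 = rpa hd 3 := by rw [← hj₀, ← hkeq]
    rw [rpa_three hd] at h3
    exact rpa_ne_neg hd 0 h3
  have hklt : k < N := lt_of_le_of_ne hkN' hkne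
  -- k+1 is not good
  have hk1 : f (rpS hd n (T (k+1))) j₀ ≠ rpa hd (T (k+1)) := by
    intro h
    have : k + 1 ∈ K := by
      rw [hK, Finset.mem_filter, Finset.mem_range]
      exact ⟨by omega, h⟩
    have := hkmax _ this
    omega
  -- conclude
  refine ⟨rpS hd n (T k), rpS hd n (T (k+1)), hcard k hkN', hcard (k+1) (by omega), ?_, ?_⟩
  · calc Metric.hausdorffDist _ _ ≤ 3 * |T k - T (k+1)| := rpS_hausdorff hd _ _
      _ = 3 * |T (k+1) - T k| := by rw [abs_sub_comm]
      _ ≤ 3 * (3/N) := by have := hTdiff k; linarith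
      _ = 9 / N := by ring
      _ < δ := hstep
  · obtain ⟨_, hmem2, _⟩ := hf _ (hcard (k+1) (by omega))
    set φ := f (rpS hd n (T (k+1))) j₀ with hφ
    have hφmem : φ ∈ rpS hd n (T (k+1)) := hmem2 j₀
    have hfar : 2 ≤ ‖φ - rpa hd (T (k+1))‖ :=
      rp_far hd (hT0 _) (hT3 _ (by omega)) hφmem hk1
    have hmov : ‖rpa hd (T (k+1)) - rpa hd (T k)‖ ≤ 9/N := by
      calc ‖rpa hd (T (k+1)) - rpa hd (T k)‖ ≤ 3 * |T (k+1) - T k| := rpa_lip hd _ _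
        _ ≤ 3 * (3/N) := by have := hTdiff k; linarith
        _ = 9/N := by ring
    have hterm : 1/2 ≤ ‖f (rpS hd n (T k)) j₀ - φ‖ := by
      rw [hkeq]
      have htri : ‖φ - rpa hd (T (k+1))‖ ≤
          ‖φ - rpa hd (T k)‖ + ‖rpa hd (T (k+1)) - rpa hd (T k)‖ := by
        have : φ - rpa hd (T (k+1)) = (φ - rpa hd (T k)) - (rpa hd (T (k+1)) - rpa hd (T k)) := by
          module
        rw [this]
        exact norm_sub_le _ _
      have : 3/2 ≤ ‖φ - rpa hd (T k)‖ := by linarith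
      rw [show rpa hd (T k) - φ = -(φ - rpa hd (T k)) by module, norm_neg]
      linarith
    calc (1:ℝ)/2 ≤ ‖f (rpS hd n (T k)) j₀ - φ‖ := hterm
      _ ≤ ∑ j, ‖f (rpS hd n (T k)) j - f (rpS hd n (T (k+1))) j‖ := by
        rw [hφ]
        exact Finset.single_le_sum
          (f := fun j => ‖f (rpS hd n (T k)) j - f (rpS hd n (T (k+1))) j‖)
          (fun j _ => norm_nonneg _) (Finset.mem_univ j₀)
end

section
/- The Chamfer loss does not distinguish multisets with duplicates in the following sense: for every ε > 0, there exist multisets A = {1, 1+δ, 9} and B = {1, 9, 9+δ} with δ > 0 such that L_C(A, B) < ε while the Hungarian loss L_H(A, B) ≥ 32. -/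
/-- Chamfer loss for multisets of reals represented as lists of length 3. -/
noncomputable def chamferLoss (A B : Fin 3 → ℝ) : ℝ :=
  (∑ i, Finset.univ.inf' Finset.univ_nonempty (fun j => (A i - B j) ^ 2)) +
  (∑ j, Finset.univ.inf' Finset.univ_nonempty (fun i => (A i - B j) ^ 2))

/-- Hungarian loss for multisets of reals represented as lists of length 3. -/
noncomputable def hungarianLoss (A B : Fin 3 → ℝ) : ℝ :=
  Finset.univ.inf' Finset.univ_nonempty
    (fun π : Equiv.Perm (Fin 3) => ∑ i, (A i - B (π i)) ^ 2)

lemma inf3 (f : Fin 3 → ℝ) :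
    Finset.univ.inf' Finset.univ_nonempty f = min (f 0) (min (f 1) (f 2)) := by
  apply le_antisymm
  · exact le_min (Finset.inf'_le _ (Finset.mem_univ _))
      (le_min (Finset.inf'_le _ (Finset.mem_univ _)) (Finset.inf'_le _ (Finset.mem_univ _)))
  · apply Finset.le_inf'
    intro i _
    fin_cases i
    · exact min_le_left _ _
    · exact le_trans (min_le_right _ _) (min_le_left _ _)
    · exact le_trans (min_le_right _ _) (min_le_right _ _)

/-- The Chamfer loss between `{1, 1+δ, 9}` and `{1, 9, 9+δ}` can be made arbitrarily
small, while the Hungarian loss stays at least 32. -/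
theorem chamfer_does_not_distinguish (ε : ℝ) (hε : 0 < ε) :
    ∃ δ > (0:ℝ),
      chamferLoss ![1, 1 + δ, 9] ![1, 9, 9 + δ] < ε ∧
      32 ≤ hungarianLoss ![1, 1 + δ, 9] ![1, 9, 9 + δ] := by
  set δ : ℝ := min 1 (ε/4) with hδdef
  have hδ0 : 0 < δ := by positivity
  have hδ1 : δ ≤ 1 := min_le_left _ _
  have hδε : δ ≤ ε/4 := min_le_right _ _
  refine ⟨δ, hδ0, ?_, ?_⟩
  · unfold chamferLoss
    simp only [inf3, Fin.sum_univ_three, Matrix.cons_val_zero, Matrix.cons_val_one,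
      Matrix.head_cons, Matrix.cons_val_two, Matrix.tail_cons]
    have h1 : min ((1 - 1:ℝ)^2) (min ((1 - 9)^2) ((1 - (9+δ))^2)) ≤ (1-1:ℝ)^2 :=
      min_le_left _ _
    have h2 : min ((1 + δ - 1:ℝ)^2) (min ((1 + δ - 9)^2) ((1 + δ - (9+δ))^2)) ≤ (1+δ-1:ℝ)^2 :=
      min_le_left _ _
    have h3 : min ((9 - 1:ℝ)^2) (min ((9 - 9)^2) ((9 - (9+δ))^2)) ≤ (9-9:ℝ)^2 :=
      le_trans (min_le_right _ _) (min_le_left _ _)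
    have h4 : min ((1 - 1:ℝ)^2) (min ((1 + δ - 1)^2) ((9 - 1)^2)) ≤ (1-1:ℝ)^2 :=
      min_le_left _ _
    have h5 : min ((1 - 9:ℝ)^2) (min ((1 + δ - 9)^2) ((9 - 9)^2)) ≤ (9-9:ℝ)^2 :=
      le_trans (min_le_right _ _) (min_le_right _ _)
    have h6 : min ((1 - (9+δ):ℝ)^2) (min ((1 + δ - (9+δ))^2) ((9 - (9+δ))^2)) ≤ (9-(9+δ):ℝ)^2 :=
      le_trans (min_le_right _ _) (min_le_right _ _)
    nlinarith [sq_nonneg δ]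
  · unfold hungarianLoss
    apply Finset.le_inf'
    intro π _
    have key : ∃ j : Fin 3, j ≠ 2 ∧ π j ≠ 0 := by
      by_contra h
      push_neg at h
      have h0 := h 0 (by decide)
      have h1 := h 1 (by decide)
      exact absurd (π.injective (h0.trans h1.symm)) (by decide)
    obtain ⟨j, hj2, hj0⟩ := key
    have hA : (![1, 1 + δ, 9] : Fin 3 → ℝ) j ≤ 1 + δ := by
      fin_cases j
      · simp; linarith
      · simp
      · simp_all
    have h12 : π j = 1 ∨ π j = 2 := by
      have h3 := (π j).isLt
      have h0 : (π j).val ≠ 0 := fun h => hj0 (Fin.ext h)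
      rcases Nat.lt_or_ge (π j).val 2 with h | h
      · left; exact Fin.ext (by omega)
      · right; exact Fin.ext (by omega)
    have hB : 9 ≤ (![1, 9, 9 + δ] : Fin 3 → ℝ) (π j) := by
      rcases h12 with h | h <;> rw [h] <;> simp <;> linarith
    have hterm : (32:ℝ) ≤ ((![1, 1 + δ, 9] : Fin 3 → ℝ) j - (![1, 9, 9 + δ] : Fin 3 → ℝ) (π j))^2 := by
      nlinarith
    refine le_trans hterm ?_
    exact Finset.single_le_sum
      (f := fun i => ((![1, 1 + δ, 9] : Fin 3 → ℝ) i - (![1, 9, 9 + δ] : Fin 3 → ℝ) (π i))^2)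
      (fun i _ => sq_nonneg _) (Finset.mem_univ j)
end
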